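/- For any real matrix B of rank r and any matrix A_k of rank at most k (k ≤ r), the Frobenius approximation error satisfies ‖B − A_k‖_F² ≥ Σ_{i=k+1}^r σᵢ(B)², where σᵢ(B) are the singular values of B in descending order. In particular, the truncated SVD achieves the minimal rank-k Frobenius approximation error (Eckart–Young–Mirsky theorem for the Frobenius norm). -/

import Mathlib

noncomputable def frobNorm {m n : ℕ} (A : Matrix (Fin m) (Fin n) ℝ) : ℝ :=
  Real.sqrt (∑ i, ∑ j, (A i j) ^ 2)

theorem Matrix.isHermitian_transpose_mul_self {m n α : Type*} [CommSemiring α] [StarRing α]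
    [TrivialStar α] [Fintype m] (A : Matrix m n α) : (A.transpose * A).IsHermitian := by
  rw [Matrix.IsHermitian, Matrix.conjTranspose_eq_transpose_of_trivial, Matrix.transpose_mul,
    Matrix.transpose_transpose]

/-- The `k`-th largest singular value (0-indexed, so `sv B k = σ_{k+1}(B)`), 0 if `k ≥ n`. -/
noncomputable def sv {m n : ℕ} (B : Matrix (Fin m) (Fin n) ℝ) (k : ℕ) : ℝ :=
  if h : k < n then
    Real.sqrt (((Matrix.isHermitian_transpose_mul_self B).eigenvalues ∘
      Tuple.sort ((Matrix.isHermitian_transpose_mul_self B).eigenvalues)) (Fin.rev ⟨k, h⟩))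
  else 0

/-!
Write `Bᵀ B = W diag(σ₀², …, σₙ₋₁²) Wᵀ` with `W` orthogonal and the `σᵢ` in decreasing order;
they vanish from index `rank B` on. If `rank A ≤ k`, let `P` be the orthogonal projection onto
`ker A`, so `trace P ≥ n - k`. Then `‖B - A‖² ≥ ‖(B - A) P‖² = ‖B P‖² = ∑ σᵢ² tᵢ` with
`tᵢ = (Wᵀ P W)ᵢᵢ ∈ [0, 1]` and `∑ tᵢ = trace P ≥ n - k`, and such a weighted sum is at least
the sum of the `n - k` smallest `σᵢ²`. The truncated SVD `B W diag(1_{i<k}) Wᵀ` attains it.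
-/

open Matrix Finset

theorem sum_le_sum_mul_of_card_le_sum {ι : Type*} [Fintype ι] {f t : ι → ℝ} {s : Finset ι}
    (hf : 0 ≤ f) (hfs : ∀ i ∈ s, ∀ j ∉ s, f i ≤ f j) (ht₀ : 0 ≤ t) (ht₁ : t ≤ 1)
    (hs : (#s : ℝ) ≤ ∑ i, t i) :
    ∑ i ∈ s, f i ≤ ∑ i, f i * t i := by
  classical
  rcases s.eq_empty_or_nonempty with rfl | hne
  · simpa using sum_nonneg fun i _ => mul_nonneg (hf i) (ht₀ i)
  set γ := s.sup' hne f
  have hγ : 0 ≤ γ := (hf _).trans (le_sup' f hne.choose_spec)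
  -- summing these bounds gives `∑ i ∈ s, f i - ∑ i, f i * t i ≤ γ * (#s - ∑ i, t i) ≤ 0`
  have hsep : ∀ i, f i * ((if i ∈ s then 1 else 0) - t i) ≤
      γ * ((if i ∈ s then 1 else 0) - t i) := by
    intro i
    by_cases hi : i ∈ s
    · simp only [hi, if_true]
      exact mul_le_mul_of_nonneg_right (le_sup' f hi) (sub_nonneg.2 (ht₁ i))
    · simp only [hi, if_false, zero_sub, mul_neg, neg_le_neg_iff]
      exact mul_le_mul_of_nonneg_right (sup'_le hne f fun j hj => hfs j hj i hi) (ht₀ i)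
  have hsum := sum_le_sum fun i (_ : i ∈ univ) => hsep i
  simp only [mul_sub, sum_sub_distrib, ← mul_sum, mul_ite, mul_one, mul_zero, sum_ite_mem,
    univ_inter, sum_const, nsmul_eq_mul] at hsum
  nlinarith [mul_le_mul_of_nonneg_left hs hγ]

theorem Antitone.eq_zero_of_card_ne_zero_le {n r : ℕ} {f : Fin n → ℝ} (hf : Antitone f)
    (hf₀ : 0 ≤ f) (hr : Fintype.card {i // f i ≠ 0} ≤ r) {i : Fin n} (hi : r ≤ i) : f i = 0 := by
  by_contra hne
  have hpos : 0 < f i := lt_of_le_of_ne (hf₀ i) (Ne.symm hne)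
  have hsub : Iic i ⊆ ({j | f j ≠ 0} : Finset (Fin n)) := fun j hj =>
    mem_filter.2 ⟨mem_univ j, (hpos.trans_le (hf (mem_Iic.1 hj))).ne'⟩
  have := card_le_card hsub
  rw [Fin.card_Iic, ← Fintype.card_subtype] at this
  omega

theorem trace_transpose_mul_self {m n : Type*} [Fintype m] [Fintype n] (M : Matrix m n ℝ) :
    trace (Mᵀ * M) = ∑ i, ∑ j, M i j ^ 2 := by
  rw [trace, sum_comm]
  simp [mul_apply, sq]

theorem frobNorm_sq {m n : ℕ} (M : Matrix (Fin m) (Fin n) ℝ) :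
    frobNorm M ^ 2 = trace (Mᵀ * M) := by
  rw [frobNorm, Real.sq_sqrt (by positivity), trace_transpose_mul_self]

theorem trace_transpose_mul_self_mul_orthogonal {m n : Type*} [Fintype m] [Fintype n]
    [DecidableEq n] {W : Matrix n n ℝ} (hW : Wᵀ * W = 1) (X : Matrix m n ℝ) :
    trace ((X * Wᵀ)ᵀ * (X * Wᵀ)) = trace (Xᵀ * X) := by
  rw [transpose_mul, transpose_transpose, Matrix.mul_assoc, trace_mul_comm, Matrix.mul_assoc,
    Matrix.mul_assoc, hW, Matrix.mul_one]

theorem Matrix.IsHermitian.exists_orthogonal_diagonal_comp_perm {n : Type*} [Fintype n]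
    [DecidableEq n] {S : Matrix n n ℝ} (hS : S.IsHermitian) (σ : Equiv.Perm n) :
    ∃ W : Matrix n n ℝ, W * Wᵀ = 1 ∧ S = W * diagonal (hS.eigenvalues ∘ σ) * Wᵀ := by
  set V : Matrix n n ℝ := ↑hS.eigenvectorUnitary
  have hV : V * Vᵀ = 1 := mem_unitaryGroup_iff.mp hS.eigenvectorUnitary.2
  have hSV : S = V * diagonal hS.eigenvalues * Vᵀ := by
    conv_lhs => rw [hS.spectral_theorem, Unitary.conjStarAlgAut_apply]
    rfl
  refine ⟨V.submatrix id σ, ?_, ?_⟩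
  · rw [transpose_submatrix, submatrix_mul_equiv, hV, submatrix_id_id]
  · rw [transpose_submatrix, ← submatrix_diagonal_equiv, submatrix_mul_equiv,
      submatrix_mul_equiv, submatrix_id_id]
    exact hSV

section Projection

variable {m n : Type*} [Fintype m] [Fintype n] {P : Matrix n n ℝ}

theorem trace_transpose_mul_self_nonneg (M : Matrix m n ℝ) : 0 ≤ trace (Mᵀ * M) := by
  rw [trace_transpose_mul_self]
  positivity

theorem trace_transpose_mul_self_mul_proj (hPt : Pᵀ = P) (hPP : P * P = P) (M : Matrix m n ℝ) :
    trace (Mᵀ * M * P) = trace ((M * P)ᵀ * (M * P)) := by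
  symm
  rw [transpose_mul, hPt, Matrix.mul_assoc, trace_mul_comm, Matrix.mul_assoc, Matrix.mul_assoc,
    hPP, ← Matrix.mul_assoc]

theorem trace_transpose_mul_self_mul_proj_le [DecidableEq n] (hPt : Pᵀ = P) (hPP : P * P = P)
    (M : Matrix m n ℝ) : trace (Mᵀ * M * P) ≤ trace (Mᵀ * M) := by
  have hQt : (1 - P)ᵀ = 1 - P := by rw [transpose_sub, transpose_one, hPt]
  have hQQ : (1 - P) * (1 - P) = 1 - P := by
    rw [Matrix.sub_mul, Matrix.one_mul, Matrix.mul_sub, Matrix.mul_one, hPP, sub_self, sub_zero]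
  have := trace_transpose_mul_self_nonneg (M * (1 - P))
  rw [← trace_transpose_mul_self_mul_proj hQt hQQ, Matrix.mul_sub, Matrix.mul_one,
    trace_sub] at this
  linarith

theorem diag_eq_sum_sq_of_proj (hPt : Pᵀ = P) (hPP : P * P = P) (i : n) :
    P i i = ∑ j, P i j ^ 2 := by
  conv_lhs => rw [← hPP, mul_apply]
  refine sum_congr rfl fun j _ => ?_
  rw [sq, ← transpose_apply P j i, hPt]

theorem diag_nonneg_of_proj (hPt : Pᵀ = P) (hPP : P * P = P) (i : n) : 0 ≤ P i i := by
  rw [diag_eq_sum_sq_of_proj hPt hPP]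
  positivity

theorem diag_le_one_of_proj (hPt : Pᵀ = P) (hPP : P * P = P) (i : n) : P i i ≤ 1 := by
  have h : P i i ^ 2 ≤ P i i := calc
    P i i ^ 2 ≤ ∑ j, P i j ^ 2 := single_le_sum (fun j _ => sq_nonneg (P i j)) (mem_univ i)
    _ = P i i := (diag_eq_sum_sq_of_proj hPt hPP i).symm
  nlinarith [diag_nonneg_of_proj hPt hPP i]

theorem proj_conj_of_mul_transpose_eq_one [DecidableEq n] {W : Matrix n n ℝ} (hW : W * Wᵀ = 1)
    (hPt : Pᵀ = P) (hPP : P * P = P) :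
    (Wᵀ * P * W)ᵀ = Wᵀ * P * W ∧ Wᵀ * P * W * (Wᵀ * P * W) = Wᵀ * P * W := by
  refine ⟨by rw [transpose_mul, transpose_mul, transpose_transpose, hPt, Matrix.mul_assoc], ?_⟩
  simp only [Matrix.mul_assoc]
  rw [← Matrix.mul_assoc W, hW, Matrix.one_mul, ← Matrix.mul_assoc P, hPP]

theorem exists_orthonormal_columns_mul_eq_zero [DecidableEq n] (A : Matrix m n ℝ) :
    ∃ (d : ℕ) (Y : Matrix n (Fin d) ℝ),
      Yᵀ * Y = 1 ∧ A * Y = 0 ∧ d + A.rank = Fintype.card n := by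
  set K := LinearMap.ker (toEuclideanLin A)
  let b := stdOrthonormalBasis ℝ K
  refine ⟨Module.finrank ℝ K, of fun a j => (b j : EuclideanSpace ℝ n) a, ?_, ?_, ?_⟩
  · ext i j
    have h := orthonormal_iff_ite.mp b.orthonormal i j
    simp only [Submodule.coe_inner, PiLp.inner_apply, RCLike.inner_apply, conj_trivial] at h
    rw [one_apply, ← h, mul_apply]
    exact sum_congr rfl fun x _ => mul_comm _ _
  · ext a j
    have h : A *ᵥ (b j : EuclideanSpace ℝ n).ofLp = 0 :=
      congrArg WithLp.ofLp (LinearMap.mem_ker.mp (b j).2)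
    simpa [mulVec, dotProduct, mul_apply] using congrFun h a
  · rw [rank_eq_finrank_range_toLin A (EuclideanSpace.basisFun m ℝ).toBasis
      (EuclideanSpace.basisFun n ℝ).toBasis, ← toEuclideanLin_eq_toLin_orthonormal, add_comm,
      LinearMap.finrank_range_add_finrank_ker, finrank_euclideanSpace]

theorem exists_proj_mul_eq_zero [DecidableEq n] (A : Matrix m n ℝ) :
    ∃ P : Matrix n n ℝ, Pᵀ = P ∧ P * P = P ∧ A * P = 0 ∧ trace P + A.rank = Fintype.card n := by
  obtain ⟨d, Y, hY, hAY, hd⟩ := exists_orthonormal_columns_mul_eq_zero A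
  refine ⟨Y * Yᵀ, by rw [transpose_mul, transpose_transpose], ?_, ?_, ?_⟩
  · rw [Matrix.mul_assoc, ← Matrix.mul_assoc Yᵀ, hY, Matrix.one_mul]
  · rw [← Matrix.mul_assoc, hAY, Matrix.zero_mul]
  · rw [trace_mul_comm, hY, trace_one, Fintype.card_fin]
    exact_mod_cast hd

end Projection

section Diagonalization

variable {m n : ℕ} {B : Matrix (Fin m) (Fin n) ℝ} {W : Matrix (Fin n) (Fin n) ℝ} {s : Fin n → ℝ}

theorem card_ne_zero_eq_rank (hW : W * Wᵀ = 1) (hB : Bᵀ * B = W * diagonal s * Wᵀ) :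
    Fintype.card {i // s i ≠ 0} = B.rank := by
  rw [← rank_transpose_mul_self, hB, rank_mul_eq_left_of_isUnit_det _ _
    (isUnit_det_of_left_inverse hW), rank_mul_eq_right_of_isUnit_det _ _
    (isUnit_det_of_right_inverse hW), rank_diagonal]

theorem eq_zero_of_rank_le (hW : W * Wᵀ = 1) (hB : Bᵀ * B = W * diagonal s * Wᵀ)
    (hs : Antitone s) (hs₀ : 0 ≤ s) {i : Fin n} (hi : B.rank ≤ i) : s i = 0 :=
  hs.eq_zero_of_card_ne_zero_le hs₀ (card_ne_zero_eq_rank hW hB).le hi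

theorem trace_transpose_mul_self_mul_eq_sum (hB : Bᵀ * B = W * diagonal s * Wᵀ)
    (P : Matrix (Fin n) (Fin n) ℝ) : trace (Bᵀ * B * P) = ∑ i, s i * (Wᵀ * P * W) i i := by
  rw [hB, Matrix.mul_assoc, Matrix.mul_assoc, trace_mul_comm, Matrix.mul_assoc]
  simp only [trace, diag_apply, diagonal_mul]

theorem sum_le_frobNorm_sub_sq (hW : W * Wᵀ = 1) (hB : Bᵀ * B = W * diagonal s * Wᵀ)
    (hs : Antitone s) (hs₀ : 0 ≤ s) {k : ℕ} {A : Matrix (Fin m) (Fin n) ℝ} (hA : A.rank ≤ k) :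
    ∑ i : Fin n with k ≤ i.val, s i ≤ frobNorm (B - A) ^ 2 := by
  obtain ⟨P, hPt, hPP, hAP, hP⟩ := exists_proj_mul_eq_zero A
  obtain ⟨hQt, hQQ⟩ := proj_conj_of_mul_transpose_eq_one hW hPt hPP
  have hcount : #{i : Fin n | k ≤ i.val} + A.rank ≤ n := by
    have hsplit := card_filter_add_card_filter_not (s := univ) (fun i : Fin n => i.val < k)
    simp only [not_lt, card_univ, Fintype.card_fin, Fin.card_filter_val_lt] at hsplit
    have := A.rank_le_width
    omega
  have hcard : (#{i : Fin n | k ≤ i.val} : ℝ) ≤ trace (Wᵀ * P * W) := by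
    rw [Matrix.mul_assoc, trace_mul_comm, Matrix.mul_assoc, hW, Matrix.mul_one]
    rw [Fintype.card_fin] at hP
    have : (#{i : Fin n | k ≤ i.val} : ℝ) + A.rank ≤ n := by exact_mod_cast hcount
    linarith
  have hsep : ∀ i ∈ ({i | k ≤ i.val} : Finset (Fin n)),
      ∀ j ∉ ({i | k ≤ i.val} : Finset (Fin n)), s i ≤ s j := by
    intro i hi j hj
    simp only [mem_filter, mem_univ, true_and, not_le] at hi hj
    exact hs (Fin.le_def.2 (by omega))
  calc ∑ i : Fin n with k ≤ i.val, s i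
      ≤ ∑ i, s i * (Wᵀ * P * W) i i :=
        sum_le_sum_mul_of_card_le_sum hs₀ hsep (diag_nonneg_of_proj hQt hQQ)
          (diag_le_one_of_proj hQt hQQ) hcard
    _ = trace ((B - A)ᵀ * (B - A) * P) := by
        rw [← trace_transpose_mul_self_mul_eq_sum hB, trace_transpose_mul_self_mul_proj hPt hPP,
          trace_transpose_mul_self_mul_proj hPt hPP, Matrix.sub_mul, hAP, sub_zero]
    _ ≤ trace ((B - A)ᵀ * (B - A)) := trace_transpose_mul_self_mul_proj_le hPt hPP _
    _ = frobNorm (B - A) ^ 2 := (frobNorm_sq _).symm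

theorem exists_rank_le_frobNorm_sub_sq_eq (hW : W * Wᵀ = 1) (hB : Bᵀ * B = W * diagonal s * Wᵀ)
    (k : ℕ) : ∃ A : Matrix (Fin m) (Fin n) ℝ,
      A.rank ≤ k ∧ frobNorm (B - A) ^ 2 = ∑ i : Fin n with k ≤ i.val, s i := by
  have hWt : Wᵀ * W = 1 := mul_eq_one_comm.mp hW
  set e : Fin n → ℝ := fun i => if k ≤ i.val then 1 else 0
  refine ⟨B * W * diagonal (1 - e) * Wᵀ, ?_, ?_⟩
  · calc (B * W * diagonal (1 - e) * Wᵀ).rank ≤ (diagonal (1 - e)).rank :=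
          (rank_mul_le_left _ _).trans (rank_mul_le_right _ _)
      _ = #{i : Fin n | i.val < k} := by
          rw [rank_diagonal, Fintype.card_subtype]
          congr 1
          ext i
          by_cases hi : k ≤ i.val <;> simp [e, hi]
          omega
      _ ≤ k := by
          rw [Fin.card_filter_val_lt]
          exact min_le_right _ _
  · have hBA : B - B * W * diagonal (1 - e) * Wᵀ = B * W * diagonal e * Wᵀ := by
      have hsub : diagonal (1 - e) = 1 - diagonal e := by rw [← diagonal_one, diagonal_sub]; rfl
      rw [hsub, Matrix.mul_sub, Matrix.sub_mul, Matrix.mul_one, Matrix.mul_assoc B, hW,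
        Matrix.mul_one, sub_sub_cancel]
    have hBW : (B * W)ᵀ * (B * W) = diagonal s := by
      rw [transpose_mul, Matrix.mul_assoc, ← Matrix.mul_assoc Bᵀ, hB]
      simp only [Matrix.mul_assoc]
      rw [hWt, Matrix.mul_one, ← Matrix.mul_assoc, hWt, Matrix.one_mul]
    rw [hBA, frobNorm_sq, trace_transpose_mul_self_mul_orthogonal hWt, transpose_mul,
      diagonal_transpose, Matrix.mul_assoc, ← Matrix.mul_assoc (B * W)ᵀ, hBW,
      diagonal_mul_diagonal, diagonal_mul_diagonal, trace_diagonal, sum_filter]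
    refine sum_congr rfl fun i _ => ?_
    by_cases hi : k ≤ i.val <;> simp [e, hi]

end Diagonalization

section SingularValues

variable {m n : ℕ} (B : Matrix (Fin m) (Fin n) ℝ)

theorem sv_sq_eq (i : Fin n) :
    sv B i ^ 2 = (isHermitian_transpose_mul_self B).eigenvalues
      (Tuple.sort (isHermitian_transpose_mul_self B).eigenvalues i.rev) := by
  rw [sv, dif_pos i.2, Fin.eta, Function.comp_apply, Real.sq_sqrt]
  exact eigenvalues_conjTranspose_mul_self_nonneg B _

theorem antitone_sv_sq : Antitone fun i : Fin n => sv B i ^ 2 := by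
  simp only [sv_sq_eq]
  exact (Tuple.monotone_sort (isHermitian_transpose_mul_self B).eigenvalues).comp_antitone
    Fin.rev_anti

theorem exists_transpose_mul_self_eq_diagonal_sv_sq :
    ∃ W : Matrix (Fin n) (Fin n) ℝ,
      W * Wᵀ = 1 ∧ Bᵀ * B = W * diagonal (fun i : Fin n => sv B i ^ 2) * Wᵀ := by
  have hH := isHermitian_transpose_mul_self B
  have hs : (fun i : Fin n => sv B i ^ 2) =
      hH.eigenvalues ∘ (Fin.revPerm.trans (Tuple.sort hH.eigenvalues)) :=
    funext (sv_sq_eq B)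
  rw [hs]
  exact hH.exists_orthogonal_diagonal_comp_perm _

theorem sv_eq_zero_of_rank_le {i : ℕ} (hi : B.rank ≤ i) : sv B i = 0 := by
  rcases lt_or_ge i n with hin | hin
  · obtain ⟨W, hW, hB⟩ := exists_transpose_mul_self_eq_diagonal_sv_sq B
    exact pow_eq_zero_iff two_ne_zero |>.mp <|
      eq_zero_of_rank_le hW hB (antitone_sv_sq B) (fun _ => sq_nonneg _) (i := ⟨i, hin⟩) hi
  · rw [sv, dif_neg hin.not_gt]

theorem sum_Ico_rank_sv_sq (k : ℕ) :
    ∑ i ∈ Ico k B.rank, sv B i ^ 2 = ∑ i : Fin n with k ≤ i.val, sv B i ^ 2 := by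
  rw [sum_filter, Fin.sum_univ_eq_sum_range (fun i => if k ≤ i then sv B i ^ 2 else 0),
    ← sum_filter, range_eq_Ico, Ico_filter_le, max_eq_right (Nat.zero_le k)]
  refine sum_subset (Ico_subset_Ico_right B.rank_le_width) fun i hi hi' => ?_
  rw [sv_eq_zero_of_rank_le B, zero_pow two_ne_zero]
  simp only [mem_Ico, not_and, not_lt] at hi hi'
  exact hi' hi.1

end SingularValues

theorem eckart_young_mirsky_frobenius_general {m n : ℕ} (B : Matrix (Fin m) (Fin n) ℝ)
    (k : ℕ) :
    (∀ A : Matrix (Fin m) (Fin n) ℝ, A.rank ≤ k →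
        frobNorm (B - A) ^ 2 ≥ ∑ i ∈ Finset.Ico k B.rank, sv B i ^ 2) ∧
    (∃ A : Matrix (Fin m) (Fin n) ℝ, A.rank ≤ k ∧
        frobNorm (B - A) ^ 2 = ∑ i ∈ Finset.Ico k B.rank, sv B i ^ 2) := by
  obtain ⟨W, hW, hB⟩ := exists_transpose_mul_self_eq_diagonal_sv_sq B
  rw [sum_Ico_rank_sv_sq]
  exact ⟨fun A hA => sum_le_frobNorm_sub_sq hW hB (antitone_sv_sq B) (fun _ => sq_nonneg _) hA,
    exists_rank_le_frobNorm_sub_sq_eq hW hB k⟩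

/-- Eckart–Young–Mirsky theorem for the Frobenius norm: any matrix `A` of rank at most `k`
satisfies `‖B − A‖_F² ≥ Σ_{i=k+1}^r σᵢ(B)²`, and some matrix of rank at most `k`
(namely the truncated SVD) achieves this bound. -/
theorem eckart_young_mirsky_frobenius {m n : ℕ} (B : Matrix (Fin m) (Fin n) ℝ)
    (k : ℕ) (hk : k ≤ B.rank) :
    (∀ A : Matrix (Fin m) (Fin n) ℝ, A.rank ≤ k →
        frobNorm (B - A) ^ 2 ≥ ∑ i ∈ Finset.Ico k B.rank, sv B i ^ 2) ∧
    (∃ A : Matrix (Fin m) (Fin n) ℝ, A.rank ≤ k ∧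
        frobNorm (B - A) ^ 2 = ∑ i ∈ Finset.Ico k B.rank, sv B i ^ 2) :=
  eckart_young_mirsky_frobenius_general B k
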